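/- Let p ≥ 2 and let P_{n,p} denote the Legendre polynomial of degree n in p dimensions defined by the Rodrigues formula. Then for all natural numbers n ≠ m, ∫_{−1}^1 P_{n,p}(t) P_{m,p}(t) (1−t²)^{(p−3)/2} dt = 0. -/

import Mathlib

/-!
On `(-1,1)` the `k`-th derivative of `(1-t²)^α` is `(1-t²)^(α-k)` times a polynomial of degree
at most `k`. Hence `P_{n,p}` is a polynomial of degree at most `n`, while `P_{m,p}` times the
weight is a multiple of the `m`-th derivative of `(1-t²)^(m+(p-3)/2)`. For `n < m`, integrating
by parts `m` times moves all derivatives onto `P_{n,p}`, which they kill; the boundary terms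
vanish because every derivative of order `j < m` still carries the factor
`(1-t²)^(m-j+(p-3)/2)`, whose exponent is positive as `p ≥ 2`.
-/

/-- The falling factorial `(a)_n = a(a−1)⋯(a−n+1)` of a real number `a`. -/
noncomputable def fallingFactorial (a : ℝ) (n : ℕ) : ℝ :=
  ∏ i ∈ Finset.range n, (a - i)

/-- The Legendre polynomial of degree `n` in `p` dimensions, defined on `(−1,1)` by
the Rodrigues formula
`P_{n,p}(t) = ((−1)^n / (2^n (n+(p−3)/2)_n)) (1−t²)^{(3−p)/2} (d/dt)^n (1−t²)^{n+(p−3)/2}`,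
where the powers of `1−t²` are real powers. -/
noncomputable def legendreP (p n : ℕ) (t : ℝ) : ℝ :=
  ((-1 : ℝ) ^ n / (2 ^ n * fallingFactorial ((n : ℝ) + ((p : ℝ) - 3) / 2) n)) *
    (1 - t ^ 2) ^ (((3 : ℝ) - (p : ℝ)) / 2) *
    iteratedDeriv n (fun s : ℝ => (1 - s ^ 2) ^ ((n : ℝ) + ((p : ℝ) - 3) / 2)) t

open MeasureTheory

open Polynomial Set

-- `(d/dt)^k (1-t²)^α = (1-t²)^(α-k) · rodriguesPoly α k` on `(-1,1)`; the recurrence is the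
-- product rule.
noncomputable def rodriguesPoly (α : ℝ) : ℕ → ℝ[X]
  | 0 => 1
  | k + 1 =>
    C (-2 * (α - k)) * X * rodriguesPoly α k + (1 - X ^ 2) * derivative (rodriguesPoly α k)

theorem natDegree_rodriguesPoly_le (α : ℝ) : ∀ k, (rodriguesPoly α k).natDegree ≤ k
  | 0 => by simp [rodriguesPoly]
  | k + 1 => by
    have ih := natDegree_rodriguesPoly_le α k
    refine natDegree_add_le_of_degree_le ?_ ?_
    · have := natDegree_mul_le_of_le (natDegree_mul_le_of_le (natDegree_C (-2 * (α - k))).le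
        natDegree_X_le) ih
      omega
    · rcases k with _ | k
      · simp [rodriguesPoly]
      · have hsq : (1 - X ^ 2 : ℝ[X]).natDegree ≤ 2 := by compute_degree
        have := natDegree_mul_le_of_le hsq
          ((natDegree_derivative_le _).trans (Nat.sub_le_sub_right ih 1))
        omega

theorem one_sub_sq_pos {t : ℝ} (ht : t ∈ Ioo (-1 : ℝ) 1) : 0 < 1 - t ^ 2 := by
  nlinarith [ht.1, ht.2]

theorem hasDerivAt_one_sub_sq_rpow_mul_rodriguesPoly (α : ℝ) (k : ℕ) {t : ℝ}
    (ht : t ∈ Ioo (-1 : ℝ) 1) :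
    HasDerivAt (fun s => (1 - s ^ 2) ^ (α - k) * (rodriguesPoly α k).eval s)
      ((1 - t ^ 2) ^ (α - (k + 1 : ℕ)) * (rodriguesPoly α (k + 1)).eval t) t := by
  have h0 := one_sub_sq_pos ht
  have hbase : HasDerivAt (fun s : ℝ => 1 - s ^ 2) (-(2 * t)) t := by
    simpa using (hasDerivAt_pow 2 t).const_sub 1
  refine ((hbase.rpow_const (p := α - k) (Or.inl h0.ne')).mul
    ((rodriguesPoly α k).hasDerivAt t)).congr_deriv ?_
  rw [Nat.cast_succ, ← sub_sub, Real.rpow_sub_one h0.ne', rodriguesPoly]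
  simp only [eval_add, eval_mul, eval_C, eval_X, eval_sub, eval_one, eval_pow]
  field_simp

theorem iteratedDeriv_one_sub_sq_rpow (α : ℝ) (k : ℕ) :
    EqOn (iteratedDeriv k fun s => (1 - s ^ 2) ^ α)
      (fun t => (1 - t ^ 2) ^ (α - k) * (rodriguesPoly α k).eval t) (Ioo (-1) 1) := by
  induction k with
  | zero => intro t _; simp [rodriguesPoly]
  | succ k ih =>
    intro t ht
    rw [iteratedDeriv_succ, (ih.eventuallyEq_of_mem (isOpen_Ioo.mem_nhds ht)).deriv_eq,
      (hasDerivAt_one_sub_sq_rpow_mul_rodriguesPoly α k ht).deriv]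

theorem intervalIntegrable_one_sub_sq_rpow {γ : ℝ} (hγ : -1 < γ) :
    IntervalIntegrable (fun t => (1 - t ^ 2) ^ γ) volume (-1) 1 := by
  have hleft : IntervalIntegrable (fun t : ℝ => (t + 1) ^ γ * (1 - t) ^ γ) volume (-1) 0 := by
    refine IntervalIntegrable.mul_continuousOn ?_ ?_
    · simpa using (intervalIntegral.intervalIntegrable_rpow' hγ (a := 0) (b := 1)).comp_add_right 1
    · refine ContinuousOn.rpow_const (by fun_prop) fun t ht => Or.inl ?_
      rw [uIcc_of_le (by norm_num)] at ht
      linarith [ht.2]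
  have hright : IntervalIntegrable (fun t : ℝ => (t + 1) ^ γ * (1 - t) ^ γ) volume 0 1 := by
    refine IntervalIntegrable.continuousOn_mul ?_ ?_
    · simpa using (intervalIntegral.intervalIntegrable_rpow' hγ (a := 1) (b := 0)).comp_sub_left 1
    · refine ContinuousOn.rpow_const (by fun_prop) fun t ht => Or.inl ?_
      rw [uIcc_of_le (by norm_num)] at ht
      linarith [ht.1]
  refine (hleft.trans hright).congr fun t ht => ?_
  rw [uIoc_of_le (by norm_num)] at ht
  rw [← Real.mul_rpow (by linarith [ht.1]) (by linarith [ht.2])]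
  ring_nf

theorem setIntegral_eval_mul_iteratedDeriv_succ {α : ℝ} {k : ℕ} (hk : (k : ℝ) < α) (r : ℝ[X]) :
    ∫ t in Ioo (-1 : ℝ) 1, r.eval t * iteratedDeriv (k + 1) (fun s => (1 - s ^ 2) ^ α) t =
      -∫ t in Ioo (-1 : ℝ) 1,
        (derivative r).eval t * iteratedDeriv k (fun s => (1 - s ^ 2) ^ α) t := by
  set V : ℕ → ℝ → ℝ := fun j t => (1 - t ^ 2) ^ (α - j) * (rodriguesPoly α j).eval t with hV
  have hpos : 0 < α - k := sub_pos.mpr hk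
  have hV'int : IntervalIntegrable (V (k + 1)) volume (-1) 1 :=
    (intervalIntegrable_one_sub_sq_rpow (by push_cast; linarith)).mul_continuousOn
      (rodriguesPoly α (k + 1)).continuous.continuousOn
  have hibp := intervalIntegral.integral_mul_deriv_eq_deriv_mul_of_hasDerivAt (a := -1) (b := 1)
    (u := r.eval) (v := V k) (v' := V (k + 1)) r.continuous.continuousOn
    (((continuous_const.sub (continuous_pow 2)).continuousOn.rpow_const
      fun _ _ => Or.inr hpos.le).mul (rodriguesPoly α k).continuous.continuousOn)
    (fun t _ => r.hasDerivAt t)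
    (fun t ht => hasDerivAt_one_sub_sq_rpow_mul_rodriguesPoly α k (by simpa using ht))
    (r.derivative.continuous.intervalIntegrable _ _) hV'int
  have hV_one : V k 1 = 0 := by simp [hV, Real.zero_rpow hpos.ne']
  have hV_neg_one : V k (-1) = 0 := by simp [hV, Real.zero_rpow hpos.ne']
  simp only [hV_one, hV_neg_one, mul_zero, sub_zero, zero_sub, integral_Ioc_eq_integral_Ioo,
    intervalIntegral.integral_of_le (show (-1 : ℝ) ≤ 1 by norm_num)] at hibp
  calc _ = ∫ t in Ioo (-1 : ℝ) 1, r.eval t * V (k + 1) t :=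
        setIntegral_congr_fun measurableSet_Ioo fun t ht => by
          rw [iteratedDeriv_one_sub_sq_rpow α (k + 1) ht]
    _ = -∫ t in Ioo (-1 : ℝ) 1, (derivative r).eval t * V k t := hibp
    _ = _ := by
      congr 1
      exact setIntegral_congr_fun measurableSet_Ioo fun t ht => by
        rw [iteratedDeriv_one_sub_sq_rpow α k ht]

theorem setIntegral_eval_mul_iteratedDeriv {α : ℝ} {m : ℕ} (hm : (m : ℝ) - 1 < α) (r : ℝ[X]) :
    ∫ t in Ioo (-1 : ℝ) 1, r.eval t * iteratedDeriv m (fun s => (1 - s ^ 2) ^ α) t =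
      (-1) ^ m * ∫ t in Ioo (-1 : ℝ) 1, (derivative^[m] r).eval t * (1 - t ^ 2) ^ α := by
  induction m generalizing r with
  | zero => simp
  | succ m ih =>
    push_cast at hm
    rw [setIntegral_eval_mul_iteratedDeriv_succ (by linarith), ih (by linarith),
      Function.iterate_succ_apply]
    ring

theorem setIntegral_eval_mul_iteratedDeriv_eq_zero {α : ℝ} {m : ℕ} (hm : (m : ℝ) - 1 < α)
    {r : ℝ[X]} (hr : r.natDegree < m) :
    ∫ t in Ioo (-1 : ℝ) 1, r.eval t * iteratedDeriv m (fun s => (1 - s ^ 2) ^ α) t = 0 := by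
  simp [setIntegral_eval_mul_iteratedDeriv hm, iterate_derivative_eq_zero hr]

theorem exists_legendreP_mul_weight_eq (p m : ℕ) : ∃ c : ℝ, ∀ t ∈ Ioo (-1 : ℝ) 1,
    legendreP p m t * (1 - t ^ 2) ^ (((p : ℝ) - 3) / 2) =
      c * iteratedDeriv m (fun s => (1 - s ^ 2) ^ ((m : ℝ) + ((p : ℝ) - 3) / 2)) t := by
  set c := (-1) ^ m / (2 ^ m * fallingFactorial ((m : ℝ) + ((p : ℝ) - 3) / 2) m)
  refine ⟨c, fun t ht => ?_⟩
  have hweight : (1 - t ^ 2) ^ ((3 - (p : ℝ)) / 2) * (1 - t ^ 2) ^ (((p : ℝ) - 3) / 2) = 1 := by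
    rw [← Real.rpow_add (one_sub_sq_pos ht), show (3 - (p : ℝ)) / 2 + ((p : ℝ) - 3) / 2 = 0 by ring,
      Real.rpow_zero]
  rw [legendreP]
  linear_combination
    c * iteratedDeriv m (fun s => (1 - s ^ 2) ^ ((m : ℝ) + ((p : ℝ) - 3) / 2)) t * hweight

theorem exists_legendreP_eq_eval (p n : ℕ) :
    ∃ q : ℝ[X], q.natDegree ≤ n ∧ EqOn (legendreP p n) q.eval (Ioo (-1) 1) := by
  obtain ⟨c, hc⟩ := exists_legendreP_mul_weight_eq p n
  set α : ℝ := n + ((p : ℝ) - 3) / 2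
  refine ⟨C c * rodriguesPoly α n,
    (natDegree_C_mul_le _ _).trans (natDegree_rodriguesPoly_le α n), fun t ht => ?_⟩
  have hPw := hc t ht
  rw [iteratedDeriv_one_sub_sq_rpow α n ht, show α - n = ((p : ℝ) - 3) / 2 by ring] at hPw
  have hw : (1 - t ^ 2) ^ (((p : ℝ) - 3) / 2) ≠ 0 :=
    (Real.rpow_pos_of_pos (one_sub_sq_pos ht) _).ne'
  simp only [eval_mul, eval_C] at hPw ⊢
  exact mul_right_cancel₀ hw (by linear_combination hPw)

/-- Legendre polynomials in `p` dimensions of different degrees are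
orthogonal on `(−1,1)` with respect to the weight `(1−t²)^{(p−3)/2}`. -/
theorem legendreP_orthogonal
    (p : ℕ) (hp : 2 ≤ p) (n m : ℕ) (hnm : n ≠ m) :
    ∫ t in Set.Ioo (-1 : ℝ) 1,
      legendreP p n t * legendreP p m t * (1 - t ^ 2) ^ (((p : ℝ) - 3) / 2) = 0 := by
  wlog hlt : n < m generalizing n m
  · rw [← this m n hnm.symm (by omega)]
    exact setIntegral_congr_fun measurableSet_Ioo fun t _ => by ring
  obtain ⟨q, hq, hPn⟩ := exists_legendreP_eq_eval p n
  obtain ⟨c, hPm⟩ := exists_legendreP_mul_weight_eq p m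
  have hα : (m : ℝ) - 1 < m + ((p : ℝ) - 3) / 2 := by
    have : (2 : ℝ) ≤ p := by exact_mod_cast hp
    linarith
  calc _ = c * ∫ t in Ioo (-1 : ℝ) 1,
        q.eval t * iteratedDeriv m (fun s => (1 - s ^ 2) ^ ((m : ℝ) + ((p : ℝ) - 3) / 2)) t := by
        rw [← integral_const_mul]
        refine setIntegral_congr_fun measurableSet_Ioo fun t ht => ?_
        rw [mul_assoc, hPm t ht, hPn ht]
        ring
    _ = 0 := by rw [setIntegral_eval_mul_iteratedDeriv_eq_zero hα (hq.trans_lt hlt), mul_zero]
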